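/- Let A ∈ ℕ^{m×n} with all columns nonzero and b ∈ ℕ^m. Suppose z^b - 1 = ∑_{j=1}^n Q_j(z)(z^{A_j} - 1) with each Q_j having nonnegative coefficients. Then the number of solutions x ∈ ℕ^n of Ax = b equals 1 + ∑_{j=1}^n ∑_{α} Q_{jα} · N_j(A_j + α), where Q_{jα} is the coefficient of z^α in Q_j and N_j(c) denotes the number of solutions y ∈ ℕ^{n-1} of Â^{(j)} y = c, with Â^{(j)} the matrix obtained from A by deleting its j-th column. -/

import Mathlib

/-!
Pair polynomials with the counting function `N v = #{x | A x = v}` through the linear functional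
`z^v ↦ N v`. On the left of the identity this gives `N b - N 0 = N b - 1`; on the right each
`Q_j (z^{A_j} - 1)` gives `∑_α Q_{jα} (N (α + A_j) - N α)`. The solutions of `A x = α + A_j`
with `x_j ≥ 1` are exactly the `y + e_j` with `A y = α`, so that difference counts the solutions
of `A x = α + A_j` with `x_j = 0`.
-/

open MvPolynomial Matrix

section Solutions

variable {ι κ : Type*} [Fintype κ]

def solutions (A : Matrix ι κ ℕ) (v : ι → ℕ) : Set (κ → ℕ) := {x | A *ᵥ x = v}

variable {A : Matrix ι κ ℕ}

theorem mem_solutions {v : ι → ℕ} {x : κ → ℕ} :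
    x ∈ solutions A v ↔ ∀ i, ∑ j, A i j * x j = v i :=
  _root_.funext_iff

theorem le_of_mem_solutions {v : ι → ℕ} {x : κ → ℕ} (hx : x ∈ solutions A v) {i : ι} {j : κ}
    (hij : A i j ≠ 0) : x j ≤ v i :=
  calc x j ≤ A i j * x j := Nat.le_mul_of_pos_left _ (Nat.pos_of_ne_zero hij)
    _ ≤ ∑ k, A i k * x k := Finset.single_le_sum (f := fun k => A i k * x k)
        (fun _ _ => Nat.zero_le _) (Finset.mem_univ j)
    _ = v i := mem_solutions.mp hx i

theorem solutions_finite (hA : ∀ j, ∃ i, A i j ≠ 0) (v : ι → ℕ) : (solutions A v).Finite := by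
  choose r hr using hA
  refine (Set.Finite.pi (t := fun j => Set.Iic (v (r j))) fun j => Set.finite_Iic _).subset ?_
  intro x hx j _
  exact le_of_mem_solutions hx (hr j)

theorem solutions_zero (hA : ∀ j, ∃ i, A i j ≠ 0) : solutions A 0 = {0} := by
  ext x
  refine ⟨fun hx => funext fun j => ?_, fun hx => by simp [Set.mem_singleton_iff.mp hx, solutions]⟩
  obtain ⟨i, hi⟩ := hA j
  exact Nat.le_zero.mp (le_of_mem_solutions hx hi)

theorem solutions_add_col [DecidableEq κ] (c : ι → ℕ) (j : κ) :
    solutions A (c + A.col j) =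
      {x ∈ solutions A (c + A.col j) | x j = 0} ∪ (· + Pi.single j 1) '' solutions A c := by
  have shift (x : κ → ℕ) : A *ᵥ (x + Pi.single j 1) = A *ᵥ x + A.col j := by
    rw [mulVec_add, mulVec_single_one]
  ext x
  refine ⟨fun hx => ?_, ?_⟩
  · by_cases hxj : x j = 0
    · exact Or.inl ⟨hx, hxj⟩
    · have hle : Pi.single j 1 ≤ x := by
        intro k
        by_cases hk : k = j
        · subst hk
          simpa using Nat.one_le_iff_ne_zero.mpr hxj
        · simp [hk]
      refine Or.inr ⟨x - Pi.single j 1, ?_, tsub_add_cancel_of_le hle⟩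
      change A *ᵥ x = _ at hx
      rw [← tsub_add_cancel_of_le hle, shift] at hx
      exact add_right_cancel hx
  · rintro (⟨hx, -⟩ | ⟨y, hy, rfl⟩)
    · exact hx
    · change A *ᵥ y = c at hy
      change A *ᵥ (y + Pi.single j 1) = _
      rw [shift, hy]

theorem ncard_solutions_add_col [DecidableEq κ] (hA : ∀ j, ∃ i, A i j ≠ 0) (c : ι → ℕ)
    (j : κ) :
    (solutions A (c + A.col j)).ncard =
      (solutions A c).ncard + {x ∈ solutions A (c + A.col j) | x j = 0}.ncard := by
  have hdisj : Disjoint {x ∈ solutions A (c + A.col j) | x j = 0}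
      ((· + Pi.single j 1) '' solutions A c) := by
    rw [Set.disjoint_left]
    rintro _ ⟨-, hx⟩ ⟨y, -, rfl⟩
    simp at hx
  conv_lhs => rw [solutions_add_col]
  rw [Set.ncard_union_eq hdisj ((solutions_finite hA _).subset fun _ hx => hx.1)
    ((solutions_finite hA c).image _), Set.ncard_image_of_injective _ (add_left_injective _),
    add_comm]

end Solutions

section Pairing

variable {σ : Type*}

noncomputable def coeffPairing (N : (σ →₀ ℕ) → ℝ) : MvPolynomial σ ℝ →ₗ[ℝ] ℝ :=
  (basisMonomials σ ℝ).constr ℝ N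

variable (N : (σ →₀ ℕ) → ℝ)

theorem coeffPairing_monomial (d : σ →₀ ℕ) (c : ℝ) :
    coeffPairing N (monomial d c) = c * N d := by
  have : monomial d c = c • basisMonomials σ ℝ d := by
    rw [coe_basisMonomials, smul_monomial, smul_eq_mul, mul_one]
  rw [this, map_smul, coeffPairing, Module.Basis.constr_basis, smul_eq_mul]

theorem coeffPairing_mul_monomial_sub_one (P : MvPolynomial σ ℝ) (d : σ →₀ ℕ) :
    coeffPairing N (P * (monomial d 1 - 1)) =
      ∑ α ∈ P.support, P.coeff α * (N (α + d) - N α) := by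
  conv_lhs => rw [P.as_sum]
  simp only [Finset.sum_mul, map_sum, mul_sub, mul_one, monomial_mul, map_sub,
    coeffPairing_monomial, Finset.sum_sub_distrib]

end Pairing

theorem prod_X_pow_eq_monomial_equivFunOnFinite {σ R : Type*} [Fintype σ] [CommSemiring R]
    (b : σ → ℕ) : ∏ i, X i ^ b i = monomial (Finsupp.equivFunOnFinite.symm b) (1 : R) := by
  rw [monomial_eq, C_1, one_mul, Finsupp.prod_fintype _ _ fun _ => pow_zero _]
  rfl

theorem counting_formula_general
    (m n : ℕ) (A : Matrix (Fin m) (Fin n) ℕ)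
    (hA : ∀ j, ∃ i, A i j ≠ 0) (b : Fin m → ℕ)
    (Q : Fin n → MvPolynomial (Fin m) ℝ)
    (h : (∏ i, X i ^ b i : MvPolynomial (Fin m) ℝ) - 1 =
        ∑ j, Q j * ((∏ i, X i ^ A i j) - 1)) :
    (Nat.card {x : Fin n → ℕ // ∀ i, ∑ j, A i j * x j = b i} : ℝ) =
      1 + ∑ j, ∑ α ∈ (Q j).support, (Q j).coeff α *
        (Nat.card {y : Fin n → ℕ // y j = 0 ∧
          ∀ i, ∑ k, A i k * y k = A i j + α i} : ℝ) := by
  have hpair := congrArg (coeffPairing fun v => ((solutions A v).ncard : ℝ)) h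
  simp only [prod_X_pow_eq_monomial_equivFunOnFinite, map_sum,
    coeffPairing_mul_monomial_sub_one] at hpair
  rw [map_sub, one_def, coeffPairing_monomial, coeffPairing_monomial] at hpair
  simp only [Finsupp.coe_equivFunOnFinite_symm, Finsupp.coe_add, Finsupp.coe_zero, one_mul,
    solutions_zero hA, Set.ncard_singleton, Nat.cast_one] at hpair
  have hsol : Nat.card {x : Fin n → ℕ // ∀ i, ∑ j, A i j * x j = b i} = (solutions A b).ncard :=
    Nat.card_congr (Equiv.subtypeEquivRight fun _ => mem_solutions.symm)
  have hsplit (j : Fin n) (α : Fin m → ℕ) :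
      (Nat.card {y : Fin n → ℕ // y j = 0 ∧ ∀ i, ∑ k, A i k * y k = A i j + α i} : ℝ) =
        (solutions A (α + fun i => A i j)).ncard - (solutions A α).ncard := by
    rw [show (α + fun i => A i j) = α + A.col j from rfl, ncard_solutions_add_col hA,
      Nat.cast_add, add_sub_cancel_left]
    refine congrArg Nat.cast (Nat.card_congr (Equiv.subtypeEquivRight fun y => ?_))
    simp [mem_solutions, add_comm, and_comm]
  rw [hsol]
  simp only [hsplit]
  linarith

theorem counting_formula
    (m n : ℕ) (A : Matrix (Fin m) (Fin n) ℕ)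
    (hA : ∀ j, ∃ i, A i j ≠ 0) (b : Fin m → ℕ)
    (Q : Fin n → MvPolynomial (Fin m) ℝ)
    (hQ : ∀ j d, 0 ≤ (Q j).coeff d)
    (h : (∏ i, X i ^ b i : MvPolynomial (Fin m) ℝ) - 1 =
        ∑ j, Q j * ((∏ i, X i ^ A i j) - 1)) :
    (Nat.card {x : Fin n → ℕ // ∀ i, ∑ j, A i j * x j = b i} : ℝ) =
      1 + ∑ j, ∑ α ∈ (Q j).support, (Q j).coeff α *
        (Nat.card {y : Fin n → ℕ // y j = 0 ∧
          ∀ i, ∑ k, A i k * y k = A i j + α i} : ℝ) :=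
  counting_formula_general m n A hA b Q h
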